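/- Every Motzkin path without peaks or valleys that is symmetric (equal to its reverse with U and D interchanged) and nonempty can be written uniquely as A H A' or A H H A', where A is a peakless-valleyless Motzkin path prefix ending at some height h ≥ 0 and A' is the mirror image (reverse with U↔D swapped) of A. -/

import Mathlib

/-- Steps of bargraphs / Motzkin paths. -/
inductive Step where
  | U : Step
  | H : Step
  | D : Step
deriving DecidableEq

/-- Vertical displacement of a step. -/
def Step.val : Step → ℤ
  | .U => 1
  | .H => 0
  | .D => -1

/-- Mirror of a step (swap U and D). -/
def Step.mirror : Step → Step
  | .U => .D
  | .H => .H
  | .D => .U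

/-- Final height of a word. -/
def hgt (w : List Step) : ℤ := (w.map Step.val).sum

/-- A Motzkin path prefix: never goes below the x-axis. -/
def IsMotzkinPrefix (w : List Step) : Prop := ∀ p : List Step, p <+: w → 0 ≤ hgt p

/-- A Motzkin path: never below the x-axis, ends at height 0. -/
def IsMotzkin (w : List Step) : Prop := IsMotzkinPrefix w ∧ hgt w = 0

/-- No peak `UD` and no valley `DU`. -/
def Cornerless (w : List Step) : Prop :=
  ¬ [Step.U, Step.D] <:+: w ∧ ¬ [Step.D, Step.U] <:+: w

/-- A bargraph: starts at the origin, ends on the x-axis, stays strictly above the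
x-axis except at the endpoints, and has no factor `UD` or `DU`. -/
def IsBargraph (w : List Step) : Prop :=
  2 ≤ w.length ∧ hgt w = 0 ∧
    (∀ p : List Step, p <+: w → p ≠ [] → p ≠ w → 0 < hgt p) ∧ Cornerless w

/-- Semiperimeter: number of `U` steps plus number of `H` steps. -/
def semi (w : List Step) : ℕ := w.count Step.U + w.count Step.H

/-- Length of the initial run of `U` steps. -/
def leadU : List Step → ℕ
  | Step.U :: rest => leadU rest + 1
  | _ => 0

/-- Length of the initial run of `H` steps. -/
def leadH : List Step → ℕ
  | Step.H :: rest => leadH rest + 1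
  | _ => 0

/-- Length of the initial run of `D` steps. -/
def leadD : List Step → ℕ
  | Step.D :: rest => leadD rest + 1
  | _ => 0

/-- Length of the first maximal run of `D` steps (0 if none). -/
def firstDescLen : List Step → ℕ
  | [] => 0
  | Step.D :: rest => leadD rest + 1
  | _ :: rest => firstDescLen rest

/-- Number of occurrences of the two-letter factor `a b`. -/
def cnt2 (a b : Step) : List Step → ℕ
  | x :: y :: rest => (if x = a ∧ y = b then 1 else 0) + cnt2 a b (y :: rest)
  | _ => 0

/-- Heights of the columns (`H` steps), starting from a given height. -/
def colHeights : ℤ → List Step → List ℤ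
  | _, [] => []
  | h, Step.U :: rest => colHeights (h + 1) rest
  | h, Step.H :: rest => h :: colHeights h rest
  | h, Step.D :: rest => colHeights (h - 1) rest

/-- Width of the leftmost maximal horizontal segment (0 if none). -/
def lhsW : List Step → ℕ
  | [] => 0
  | Step.H :: rest => leadH rest + 1
  | _ :: rest => lhsW rest

/-- Delete `h` steps at the start of the leftmost horizontal segment. -/
def stripLeadH (h : ℕ) : List Step → List Step
  | [] => []
  | Step.H :: rest => List.drop h (Step.H :: rest)
  | s :: rest => s :: stripLeadH h rest

/-- Number of initial columns of height 1: largest `j` such that the word begins `U H^j`. -/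
def iuc : List Step → ℕ
  | Step.U :: rest => leadH rest
  | _ => 0

/-- Number of maximal horizontal segments. -/
def hsCount : List Step → ℕ
  | [] => 0
  | [Step.H] => 1
  | [_] => 0
  | a :: b :: rest => (if a = Step.H ∧ b ≠ Step.H then 1 else 0) + hsCount (b :: rest)

/-- Mirror image: reverse the word and swap `U` with `D`. -/
def mir (w : List Step) : List Step := (w.reverse).map Step.mirror

/-- Shape of strictly alternating bargraphs:
`U^{i₁} H D^{k₁} H U^{i₂} H D^{k₂} H ⋯ U^{iₘ} H D^{kₘ}` with all `iᵣ, kᵣ ≥ 1`. -/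
inductive SAShape : List Step → Prop where
  | base (i k : ℕ) : 1 ≤ i → 1 ≤ k →
      SAShape (List.replicate i Step.U ++ [Step.H] ++ List.replicate k Step.D)
  | cons (i k : ℕ) (w : List Step) : 1 ≤ i → 1 ≤ k → SAShape w →
      SAShape (List.replicate i Step.U ++ [Step.H] ++ List.replicate k Step.D ++ [Step.H] ++ w)

/-- A strictly alternating bargraph. -/
def IsStrictAlt (w : List Step) : Prop := IsBargraph w ∧ SAShape w

/-- A secondary structure on `{0, …, m-1}`: all consecutive edges are present, every
vertex has at most one non-consecutive neighbour, and there are no crossing edges. -/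
def IsSecondaryStructure {m : ℕ} (G : SimpleGraph (Fin m)) : Prop :=
  (∀ i j : Fin m, (i : ℕ) + 1 = (j : ℕ) → G.Adj i j) ∧
  (∀ i j k : Fin m, G.Adj i j → G.Adj i k →
      (i : ℕ) + 1 ≠ (j : ℕ) → (j : ℕ) + 1 ≠ (i : ℕ) →
      (i : ℕ) + 1 ≠ (k : ℕ) → (k : ℕ) + 1 ≠ (i : ℕ) → j = k) ∧
  ¬ ∃ i j k l : Fin m, (i : ℕ) < (j : ℕ) ∧ (j : ℕ) < (k : ℕ) ∧ (k : ℕ) < (l : ℕ) ∧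
      G.Adj i k ∧ G.Adj j l

/-- Generating function of bargraphs: `x` (variable 0) marks `H` steps,
`y` (variable 1) marks `U` steps. -/
noncomputable def BG : MvPowerSeries (Fin 2) ℚ :=
  fun d => (Nat.card {w : List Step //
    IsBargraph w ∧ w.count Step.H = d 0 ∧ w.count Step.U = d 1} : ℚ)

/-- Generating function of cornerless Motzkin paths. -/
noncomputable def MG : MvPowerSeries (Fin 2) ℚ :=
  fun d => (Nat.card {w : List Step //
    IsMotzkin w ∧ Cornerless w ∧ w.count Step.H = d 0 ∧ w.count Step.U = d 1} : ℚ)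

/-- Generating function of bargraphs avoiding the factor `DH`. -/
noncomputable def BDH : MvPowerSeries (Fin 2) ℚ :=
  fun d => (Nat.card {w : List Step //
    IsBargraph w ∧ ¬ [Step.D, Step.H] <:+: w ∧
      w.count Step.H = d 0 ∧ w.count Step.U = d 1} : ℚ)

/-- Generating function of bargraphs avoiding the factors `DH` and `HH`. -/
noncomputable def BDHHH : MvPowerSeries (Fin 2) ℚ :=
  fun d => (Nat.card {w : List Step //
    IsBargraph w ∧ ¬ [Step.D, Step.H] <:+: w ∧ ¬ [Step.H, Step.H] <:+: w ∧
      w.count Step.H = d 0 ∧ w.count Step.U = d 1} : ℚ)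

/-- Generating function of cornerless Motzkin path prefixes ending at height `h`. -/
noncomputable def Pgf (h : ℕ) : MvPowerSeries (Fin 2) ℚ :=
  fun d => (Nat.card {w : List Step //
    IsMotzkinPrefix w ∧ Cornerless w ∧ hgt w = (h : ℤ) ∧
      w.count Step.H = d 0 ∧ w.count Step.U = d 1} : ℚ)

/-- Decomposition `G = U^a G₁ H G₂ D^a` of a strictly alternating bargraph. -/
def SADecomp (t : ℕ × List Step × List Step) (G : List Step) : Prop :=
  1 ≤ t.1 ∧ IsStrictAlt t.2.1 ∧ IsStrictAlt (Step.U :: (t.2.2 ++ [Step.D])) ∧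
    G = List.replicate t.1 Step.U ++ t.2.1 ++ [Step.H] ++ t.2.2 ++
      List.replicate t.1 Step.D

/-!
Symmetry of `w` gives `w = A m (mir A)` with `A` the first `(|w| - 1) / 2` letters and a
symmetric middle factor `m` of length 1 or 2. The only self-mirror letter is `H`, and the
self-mirror pairs are `UD`, `HH`, `DU`, of which only `HH` is cornerless. Uniqueness: the two
shapes have lengths of different parity, so `|w|` determines `|A|`, hence `A`.
-/

lemma Step.mirror_mirror (s : Step) : s.mirror.mirror = s := by cases s <;> rfl

lemma mir_append (a b : List Step) : mir (a ++ b) = mir b ++ mir a := by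
  simp [mir]

lemma mir_mir (a : List Step) : mir (mir a) = a := by
  simp [mir, Function.comp_def, Step.mirror_mirror]

lemma length_mir (a : List Step) : (mir a).length = a.length := by simp [mir]

lemma IsMotzkinPrefix.of_prefix {v w : List Step} (hw : IsMotzkinPrefix w) (h : v <+: w) :
    IsMotzkinPrefix v :=
  fun p hp => hw p (hp.trans h)

lemma Cornerless.of_infix {v w : List Step} (hw : Cornerless w) (h : v <:+: w) :
    Cornerless v :=
  ⟨fun h' => hw.1 (h'.trans h), fun h' => hw.2 (h'.trans h)⟩

lemma drop_eq_mir_take {w : List Step} (hm : mir w = w) {k : ℕ} (hk : k ≤ w.length) :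
    w.drop (w.length - k) = mir (w.take k) := by
  conv_lhs => arg 2; rw [← hm]
  rw [mir, ← List.map_drop, List.drop_reverse, Nat.sub_sub_self hk, mir]

lemma eq_take_append_mir_take {w : List Step} (hm : mir w = w) {k : ℕ} (hk : 2 * k ≤ w.length) :
    w = w.take k ++ (w.drop k).take (w.length - 2 * k) ++ mir (w.take k) := by
  have hsplit : w.length - k = k + (w.length - 2 * k) := by omega
  rw [← drop_eq_mir_take hm (by omega), List.append_assoc, hsplit, List.drop_take_append_drop,
    List.take_append_drop]

lemma mir_eq_self_of_mir_append_append_mir {A m : List Step}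
    (h : mir (A ++ m ++ mir A) = A ++ m ++ mir A) : mir m = m := by
  simpa [mir_append, mir_mir] using h

lemma eq_singleton_H_of_mir_eq_self {m : List Step} (hlen : m.length = 1) (hm : mir m = m) :
    m = [Step.H] := by
  obtain ⟨a, rfl⟩ := List.length_eq_one_iff.mp hlen
  cases a <;> simp_all [mir, Step.mirror]

lemma eq_HH_of_mir_eq_self {m : List Step} (hlen : m.length = 2) (hm : mir m = m)
    (hc : Cornerless m) : m = [Step.H, Step.H] := by
  obtain ⟨a, b, rfl⟩ := List.length_eq_two.mp hlen
  cases a <;> cases b <;> simp_all [mir, Step.mirror, Cornerless]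

lemma eq_of_append_mir_eq {A B m m' : List Step} (h : A ++ m ++ mir A = B ++ m' ++ mir B)
    (hmm' : m.length ≤ m'.length + 1) (hm'm : m'.length ≤ m.length + 1) : A = B := by
  have hlen := congrArg List.length h
  simp only [List.length_append, length_mir] at hlen
  rw [List.append_assoc, List.append_assoc] at h
  exact (List.append_inj h (by omega)).1

/-- every nonempty symmetric cornerless Motzkin path can be written
uniquely as `A H A'` or `A H H A'`, where `A` is a cornerless Motzkin path prefix and
`A'` is its mirror image. -/
theorem symmetric_decomposition :
    ∀ w : List Step, IsMotzkin w → Cornerless w → mir w = w → w ≠ [] →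
      ∃! A : List Step, IsMotzkinPrefix A ∧ Cornerless A ∧
        (w = A ++ [Step.H] ++ mir A ∨ w = A ++ [Step.H, Step.H] ++ mir A) := by
  intro w hw hc hm hne
  have hpos : 0 < w.length := List.length_pos_iff.mpr hne
  set k := (w.length - 1) / 2
  set A := w.take k
  set m := (w.drop k).take (w.length - 2 * k)
  have hsplit : w = A ++ m ++ mir A := eq_take_append_mir_take hm (by omega)
  have hmm : mir m = m := mir_eq_self_of_mir_append_append_mir (hsplit ▸ hm)
  have hlen : m.length = 1 ∨ m.length = 2 := by
    simp only [m, List.length_take, List.length_drop]; omega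
  have hmid : m = [Step.H] ∨ m = [Step.H, Step.H] :=
    hlen.imp (eq_singleton_H_of_mir_eq_self · hmm)
      (eq_HH_of_mir_eq_self · hmm (hc.of_infix ⟨A, mir A, hsplit.symm⟩))
  refine ⟨A, ⟨hw.1.of_prefix (List.take_prefix k w), hc.of_infix (List.take_prefix k w).isInfix,
    hmid.imp (· ▸ hsplit : m = _ → _) (· ▸ hsplit : m = _ → _)⟩, ?_⟩
  rintro B ⟨-, -, hB | hB⟩ <;> refine eq_of_append_mir_eq (hB.symm.trans hsplit) ?_ ?_ <;>
    simp only [List.length_cons, List.length_nil] <;> omega
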